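/- Define Q(x) as: 1-x on [0,1/2], (1/2)(√(3(1-x²))-x) on (1/2,√3/2], and 0 on (√3/2,1]; and R(x) = (1/2)(√(3(1-x²))-x) on [-1,1]. Then for g ∈ [0, 1/2], Q(R(g)⁺) = g, where x⁺ = max(x,0). -/
import Mathlib


noncomputable def R (x : ℝ) : ℝ :=
  (1/2) * (Real.sqrt (3 * (1 - x^2)) - x)

noncomputable def Q (x : ℝ) : ℝ :=
  if x ≤ 1/2 then 1 - x
  else if x ≤ Real.sqrt 3 / 2 then (1/2) * (Real.sqrt (3 * (1 - x^2)) - x)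
  else 0

theorem stmt17 (g : ℝ) (hg : g ∈ Set.Icc (0:ℝ) (1/2)) :
    Q (max (R g) 0) = g := by
  obtain ⟨hg0, hg1⟩ := hg
  set s := Real.sqrt (3 * (1 - g^2)) with hs_def
  have hnn : (0:ℝ) ≤ 3 * (1 - g^2) := by nlinarith
  have hs2 : s^2 = 3 * (1 - g^2) := Real.sq_sqrt hnn
  have hs0 : 0 ≤ s := Real.sqrt_nonneg _
  have hs_lb : (3/2 : ℝ) ≤ s := by
    rw [hs_def, show (3/2:ℝ) = Real.sqrt ((3/2)^2) by rw [Real.sqrt_sq]; norm_num]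
    apply Real.sqrt_le_sqrt; nlinarith
  have hr : R g = (s - g) / 2 := by rw [R]; ring
  have hr_half : (1/2 : ℝ) ≤ R g := by rw [hr]; linarith
  have hmax : max (R g) 0 = R g := max_eq_left (by linarith)
  rw [hmax]
  by_cases hle : R g ≤ 1/2
  · have hreq : R g = 1/2 := le_antisymm hle hr_half
    have hs_eq : s = 1 + g := by rw [hr] at hreq; linarith
    have : g = 1/2 := by nlinarith
    rw [Q, if_pos hle, hreq, this]; norm_num
  · have hsqrt3 : Real.sqrt 3 = Real.sqrt (3 * (1 - 0^2)) := by norm_num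
    have hub : R g ≤ Real.sqrt 3 / 2 := by
      rw [hr, hsqrt3]
      have : s ≤ Real.sqrt (3 * (1 - 0^2)) := by
        apply Real.sqrt_le_sqrt; nlinarith
      linarith
    rw [Q, if_neg hle, if_pos hub]
    have key : 3 * (1 - (R g)^2) = (2*g + R g)^2 := by rw [hr]; nlinarith
    rw [key, Real.sqrt_sq (by linarith)]
    ring
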